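/- arXiv:2003.07915 — 2 statements merged into one kernel-verified Lean document; each statement's English description precedes it below -/
import Mathlib

section
/- (Proposition 1) Let Q be a nonempty, closed, convex subset of Δ_K. Then the optimal value of the distributionally robust network interdiction problem min_{u∈Δ_L} sup_{q∈Q} CVaR^α(u,q) equals the optimal value of the following bi-convex problem: minimize t over u ∈ ℝ^L, ζ ∈ ℝ, Δ ∈ ℝ^{L×K}, η ∈ ℝ^L, t ∈ ℝ subject to: (i) ζ + (1/(1−α)) Σ_{ℓ∈L} Σ_{k∈K} q_k Δ_{ℓ,k} ≤ t for every q ∈ Q; (ii) Δ_{ℓ,k} ≥ u_ℓ f_{ℓ,k} − η_ℓ for all ℓ ∈ L, k ∈ K; (iii) η_ℓ = u_ℓ ζ for all ℓ ∈ L; (iv) Δ_{ℓ,k} ≥ 0 for all ℓ,k; (v) u ≥ 0 and Σ_{ℓ∈L} u_ℓ = 1; (vi) 0 ≤ ζ ≤ ζ̄. -/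
open Set

/-- One-dimensional Sion-type minimax existence lemma. -/
lemma minimax_1d {K : Type*} (Q : Set (K → ℝ)) (hQc : Convex ℝ Q)
    (B : ℝ) (hB : 0 ≤ B) (g : (K → ℝ) → ℝ → ℝ) (z : ℝ)
    (hcont : ∀ q ∈ Q, Continuous (g q))
    (hconv : ∀ q ∈ Q, ConvexOn ℝ univ (g q))
    (haff : ∀ q1 ∈ Q, ∀ q2 ∈ Q, ∀ a b : ℝ, 0 ≤ a → 0 ≤ b → a + b = 1 →
      ∀ ζ, g (a • q1 + b • q2) ζ = a * g q1 ζ + b * g q2 ζ)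
    (hfeas : ∀ q ∈ Q, ∃ ζ ∈ Icc (0:ℝ) B, g q ζ ≤ z) :
    ∃ ζ ∈ Icc (0:ℝ) B, ∀ q ∈ Q, g q ζ ≤ z := by
  by_contra hcon
  push_neg at hcon
  have hicc : IsCompact (Icc (0:ℝ) B) := isCompact_Icc
  have hZcl : ∀ i : Q, IsClosed {ζ : ℝ | g (i : K → ℝ) ζ ≤ z} :=
    fun i => isClosed_le (hcont i i.2) continuous_const
  have hempty : Icc (0:ℝ) B ∩ ⋂ i : Q, {ζ : ℝ | g (i : K → ℝ) ζ ≤ z} = ∅ := by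
    ext ζ
    simp only [mem_inter_iff, mem_iInter, mem_setOf_eq, mem_empty_iff_false, iff_false, not_and,
      not_forall]
    intro hζ
    obtain ⟨q, hq, hgt⟩ := hcon ζ hζ
    exact ⟨⟨q, hq⟩, by simpa using not_le.2 hgt⟩
  obtain ⟨t, ht⟩ := hicc.elim_finite_subfamily_closed _ hZcl hempty
  set Kk : Q → Set ℝ := fun i => Icc (0:ℝ) B ∩ {ζ : ℝ | g (i : K → ℝ) ζ ≤ z} with hKk
  have hKcmpt : ∀ i : Q, IsCompact (Kk i) := fun i => hicc.inter_right (hZcl i)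
  have hKconv : ∀ i : Q, Convex ℝ (Kk i) := by
    intro i
    refine (convex_Icc 0 B).inter ?_
    have := (hconv i i.2).convex_le z
    simpa using this
  have hKne : ∀ i : Q, (Kk i).Nonempty := by
    intro i
    obtain ⟨ζ, hζ, hle⟩ := hfeas i i.2
    exact ⟨ζ, hζ, hle⟩
  have hKmem : ∀ (i : Q) (x : ℝ), sInf (Kk i) ≤ x → x ≤ sSup (Kk i) → x ∈ Kk i := by
    intro i x h1 h2
    have ha := (hKcmpt i).sInf_mem (hKne i)
    have hb := (hKcmpt i).sSup_mem (hKne i)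
    have : segment ℝ (sInf (Kk i)) (sSup (Kk i)) ⊆ Kk i :=
      (hKconv i).segment_subset ha hb
    exact this (by rw [segment_eq_Icc (le_trans h1 h2)]; exact ⟨h1, h2⟩)
  have htne : t.Nonempty := by
    rcases Finset.eq_empty_or_nonempty t with h | h
    · exfalso
      rw [h] at ht
      simp only [Finset.notMem_empty, iInter_of_empty, iInter_univ, inter_univ] at ht
      exact absurd (mem_Icc.2 ⟨le_refl 0, hB⟩) (ht ▸ notMem_empty 0)
    · exact h
  -- there exist two indices whose sublevel intervals are separated
  have hsep : ∃ i ∈ t, ∃ j ∈ t, sSup (Kk i) < sInf (Kk j) := by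
    by_contra hno
    push_neg at hno
    obtain ⟨i₀, hi₀, hmax⟩ := Finset.exists_max_image t (fun i => sInf (Kk i)) htne
    have hmem : sInf (Kk i₀) ∈ Icc (0:ℝ) B ∩ ⋂ i ∈ t, {ζ : ℝ | g (i : K → ℝ) ζ ≤ z} := by
      refine ⟨((hKcmpt i₀).sInf_mem (hKne i₀)).1, ?_⟩
      simp only [mem_iInter]
      intro i hi
      exact (hKmem i _ (hmax i hi)
        (le_of_not_gt fun hlt => absurd (hno i hi i₀ hi₀) (not_le.2 hlt))).2
    rw [ht] at hmem
    exact hmem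
  obtain ⟨i, -, j, -, hij⟩ := hsep
  -- connectedness argument along the segment from q1 to q2
  set q1 : K → ℝ := (i : K → ℝ) with hq1def
  set q2 : K → ℝ := (j : K → ℝ) with hq2def
  have hq1 : q1 ∈ Q := i.2
  have hq2 : q2 ∈ Q := j.2
  set φ : ℝ → ℝ → ℝ := fun a ζ => (1 - a) * g q1 ζ + a * g q2 ζ with hφdef
  have hqa : ∀ a ∈ Icc (0:ℝ) 1, (1 - a) • q1 + a • q2 ∈ Q := fun a ha =>
    hQc hq1 hq2 (by linarith [ha.2]) ha.1 (by ring)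
  have haffa : ∀ a ∈ Icc (0:ℝ) 1, ∀ ζ, g ((1 - a) • q1 + a • q2) ζ = φ a ζ := fun a ha ζ =>
    haff q1 hq1 q2 hq2 (1 - a) a (by linarith [ha.2]) ha.1 (by ring) ζ
  set H : Q → Set (ℝ × ℝ) := fun i' => {p : ℝ × ℝ | p.1 ∈ Icc (0:ℝ) 1 ∧ p.2 ∈ Kk i' ∧
      φ p.1 p.2 ≤ z} with hHdef
  have hCcl : ∀ i' : Q, IsClosed (Prod.fst '' H i') := by
    intro i'
    have hφc : Continuous fun p : ℝ × ℝ => φ p.1 p.2 := by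
      simp only [hφdef]
      have h1 := hcont q1 hq1
      have h2 := hcont q2 hq2
      fun_prop
    have hH : IsClosed (H i') := by
      refine IsClosed.inter (isClosed_Icc.preimage continuous_fst) (IsClosed.inter
        (((hicc.inter_right (hZcl i')).isClosed).preimage continuous_snd)
        (isClosed_le hφc continuous_const))
    have hpc : IsCompact (Icc (0:ℝ) 1 ×ˢ Icc (0:ℝ) B) := isCompact_Icc.prod isCompact_Icc
    have hcmp : IsCompact (H i') := by
      refine IsCompact.of_isClosed_subset hpc hH ?_
      rintro ⟨a, ζ⟩ ⟨ha, hζ, -⟩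
      exact ⟨ha, hζ.1⟩
    exact (hcmp.image continuous_fst).isClosed
  have hcover : Icc (0:ℝ) 1 ⊆ Prod.fst '' H i ∪ Prod.fst '' H j := by
    intro a ha
    obtain ⟨ζ, hζI, hle⟩ := hfeas _ (hqa a ha)
    rw [haffa a ha ζ] at hle
    by_cases hg1 : g q1 ζ ≤ z
    · exact Or.inl ⟨(a, ζ), ⟨ha, ⟨hζI, hg1⟩, hle⟩, rfl⟩
    · by_cases hg2 : g q2 ζ ≤ z
      · exact Or.inr ⟨(a, ζ), ⟨ha, ⟨hζI, hg2⟩, hle⟩, rfl⟩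
      · exfalso
        push_neg at hg1 hg2
        have h0 := ha.1
        have h1 := ha.2
        simp only [hφdef] at hle
        rcases eq_or_lt_of_le h0 with heq | hpos
        · rw [← heq] at hle
          simp at hle
          linarith
        · nlinarith [mul_pos hpos (sub_pos.2 hg2),
            mul_nonneg (by linarith : (0:ℝ) ≤ 1 - a) (by linarith : (0:ℝ) ≤ g q1 ζ - z)]
  have h0mem : (0:ℝ) ∈ Icc (0:ℝ) 1 ∩ Prod.fst '' H i := by
    obtain ⟨ζ1, hζ1⟩ := hKne i
    exact ⟨⟨le_refl 0, zero_le_one⟩, ⟨(0, ζ1), ⟨⟨le_refl 0, zero_le_one⟩, hζ1,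
      by simpa [hφdef] using hζ1.2⟩, rfl⟩⟩
  have h1mem : (1:ℝ) ∈ Icc (0:ℝ) 1 ∩ Prod.fst '' H j := by
    obtain ⟨ζ2, hζ2⟩ := hKne j
    exact ⟨⟨zero_le_one, le_refl 1⟩, ⟨(1, ζ2), ⟨⟨zero_le_one, le_refl 1⟩, hζ2,
      by simpa [hφdef] using hζ2.2⟩, rfl⟩⟩
  obtain ⟨a, haI, haC1, haC2⟩ := isPreconnected_closed_iff.1 isPreconnected_Icc _ _
    (hCcl i) (hCcl j) hcover ⟨0, h0mem⟩ ⟨1, h1mem⟩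
  obtain ⟨⟨a1, ζ1⟩, ⟨ha1I, hζ1K, hφ1⟩, ha1⟩ := haC1
  obtain ⟨⟨a2'', ζ2⟩, ⟨ha2I, hζ2K, hφ2⟩, ha2'⟩ := haC2
  simp only at ha1 ha2' hφ1 hφ2 hζ1K hζ2K
  rw [ha1] at hφ1
  rw [ha2'] at hφ2
  -- the midpoint of the gap gives a contradiction
  have hb1 : ζ1 ≤ sSup (Kk i) := le_csSup (hKcmpt i).bddAbove hζ1K
  have ha2 : sInf (Kk j) ≤ ζ2 := csInf_le (hKcmpt j).bddBelow hζ2K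
  set ζm : ℝ := (sSup (Kk i) + sInf (Kk j)) / 2 with hζmdef
  have hζm1 : ζ1 < ζm := by simp only [hζmdef]; linarith
  have hζm2 : ζm < ζ2 := by simp only [hζmdef]; linarith
  have hζmI : ζm ∈ Icc (0:ℝ) B := ⟨by linarith [hζ1K.1.1], by linarith [hζ2K.1.2]⟩
  have hgam : g ((1 - a) • q1 + a • q2) ζm ≤ z := by
    have hseg : ζm ∈ segment ℝ ζ1 ζ2 := by
      rw [segment_eq_Icc (by linarith)]
      exact ⟨le_of_lt hζm1, le_of_lt hζm2⟩
    have := (hconv _ (hqa a haI)).le_on_segment (mem_univ ζ1) (mem_univ ζ2) hseg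
    rw [haffa a haI ζ1, haffa a haI ζ2] at this
    calc g ((1 - a) • q1 + a • q2) ζm ≤ max (φ a ζ1) (φ a ζ2) := this
      _ ≤ z := max_le hφ1 hφ2
  have hg1m : z < g q1 ζm := by
    by_contra h
    push_neg at h
    have : ζm ∈ Kk i := ⟨hζmI, h⟩
    have := le_csSup (hKcmpt i).bddAbove this
    simp only [hζmdef] at this
    linarith
  have hg2m : z < g q2 ζm := by
    by_contra h
    push_neg at h
    have : ζm ∈ Kk j := ⟨hζmI, h⟩
    have := csInf_le (hKcmpt j).bddBelow this
    simp only [hζmdef] at this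
    linarith
  rw [haffa a haI ζm] at hgam
  simp only [hφdef] at hgam
  have h0 := haI.1
  have h1 := haI.2
  rcases eq_or_lt_of_le h0 with heq | hpos
  · rw [← heq] at hgam
    simp at hgam
    linarith
  · nlinarith [mul_pos hpos (sub_pos.2 hg2m),
      mul_nonneg (by linarith : (0:ℝ) ≤ 1 - a) (by linarith : (0:ℝ) ≤ g q1 ζm - z)]

def gfun {L K : Type*} [Fintype L] [Fintype K] (c : ℝ) (f : L → K → ℝ)
    (u : L → ℝ) (q : K → ℝ) (ζ : ℝ) : ℝ :=
  ζ + c * ∑ ℓ, ∑ k, q k * u ℓ * max (f ℓ k - ζ) 0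

section basic
variable {L K : Type*} [Fintype L] [Fintype K] {c : ℝ} {f : L → K → ℝ} {ζbar : ℝ}

lemma gfun_cont (c : ℝ) (f : L → K → ℝ) (u : L → ℝ) (q : K → ℝ) :
    Continuous (gfun c f u q) := by
  unfold gfun
  fun_prop

lemma sum_max_nonneg (f : L → K → ℝ) (u : L → ℝ) (q : K → ℝ)
    (hu : ∀ ℓ, 0 ≤ u ℓ) (hq : ∀ k, 0 ≤ q k) (ζ : ℝ) :
    0 ≤ ∑ ℓ, ∑ k, q k * u ℓ * max (f ℓ k - ζ) 0 :=
  Finset.sum_nonneg fun ℓ _ => Finset.sum_nonneg fun k _ =>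
    mul_nonneg (mul_nonneg (hq k) (hu ℓ)) (le_max_right _ _)

lemma sum_qu_eq_one (u : L → ℝ) (hu : ∑ ℓ, u ℓ = 1) (q : K → ℝ) (hq : ∑ k, q k = 1) :
    ∑ ℓ, ∑ k, q k * u ℓ = 1 := by
  have : ∀ ℓ, ∑ k, q k * u ℓ = u ℓ := by
    intro ℓ
    rw [← Finset.sum_mul, hq, one_mul]
  rw [Finset.sum_congr rfl fun ℓ _ => this ℓ, hu]

lemma gfun_at_bar (hf : ∀ ℓ k, 0 ≤ f ℓ k ∧ f ℓ k ≤ ζbar) (u : L → ℝ) (q : K → ℝ) :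
    gfun c f u q ζbar = ζbar := by
  unfold gfun
  rw [Finset.sum_eq_zero, mul_zero, add_zero]
  intro ℓ _
  rw [Finset.sum_eq_zero]
  intro k _
  rw [max_eq_right (by linarith [(hf ℓ k).2])]
  ring
end basic

section more
variable {L K : Type*} [Fintype L] [Fintype K] {c : ℝ} {f : L → K → ℝ} {ζbar : ℝ}

lemma gfun_clamp (hc1 : 1 ≤ c) (hζbar : 0 ≤ ζbar)
    (hf : ∀ ℓ k, 0 ≤ f ℓ k ∧ f ℓ k ≤ ζbar)
    (u : L → ℝ) (hu : u ∈ stdSimplex ℝ L) (q : K → ℝ) (hq : q ∈ stdSimplex ℝ K) (ζ : ℝ) :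
    ∃ ζ' ∈ Icc (0:ℝ) ζbar, gfun c f u q ζ' ≤ gfun c f u q ζ := by
  rcases le_or_gt ζ 0 with h0 | h0
  · refine ⟨0, ⟨le_refl 0, hζbar⟩, ?_⟩
    have e1 : ∀ ℓ k, q k * u ℓ * max (f ℓ k - ζ) 0
        = q k * u ℓ * f ℓ k - ζ * (q k * u ℓ) := by
      intro ℓ k
      rw [max_eq_left (by linarith [(hf ℓ k).1])]
      ring
    have e0 : ∀ ℓ k, q k * u ℓ * max (f ℓ k - 0) 0 = q k * u ℓ * f ℓ k := by
      intro ℓ k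
      rw [sub_zero, max_eq_left (hf ℓ k).1]
    have hS : ∑ ℓ, ∑ k, q k * u ℓ * max (f ℓ k - ζ) 0
        = (∑ ℓ, ∑ k, q k * u ℓ * f ℓ k) - ζ * (∑ ℓ, ∑ k, q k * u ℓ) := by
      rw [Finset.sum_congr rfl fun ℓ _ => Finset.sum_congr rfl fun k _ => e1 ℓ k]
      simp [Finset.sum_sub_distrib, Finset.mul_sum]
    have hS0 : ∑ ℓ, ∑ k, q k * u ℓ * max (f ℓ k - 0) 0
        = ∑ ℓ, ∑ k, q k * u ℓ * f ℓ k :=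
      Finset.sum_congr rfl fun ℓ _ => Finset.sum_congr rfl fun k _ => e0 ℓ k
    unfold gfun
    rw [hS, hS0, sum_qu_eq_one u hu.2 q hq.2]
    nlinarith [mul_nonneg (neg_nonneg.2 h0) (sub_nonneg.2 hc1)]
  · rcases le_or_gt ζ ζbar with h1 | h1
    · exact ⟨ζ, ⟨h0.le, h1⟩, le_refl _⟩
    · refine ⟨ζbar, ⟨hζbar, le_refl _⟩, ?_⟩
      rw [gfun_at_bar hf]
      have hz : ∑ ℓ, ∑ k, q k * u ℓ * max (f ℓ k - ζ) 0 = 0 := by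
        refine Finset.sum_eq_zero fun ℓ _ => Finset.sum_eq_zero fun k _ => ?_
        rw [max_eq_right (by linarith [(hf ℓ k).2])]
        ring
      unfold gfun
      rw [hz, mul_zero, add_zero]
      linarith

lemma gfun_affine (u : L → ℝ) (q1 q2 : K → ℝ) (a b : ℝ) (hab : a + b = 1) (ζ : ℝ) :
    gfun c f u (a • q1 + b • q2) ζ = a * gfun c f u q1 ζ + b * gfun c f u q2 ζ := by
  unfold gfun
  have hsum : ∑ ℓ, ∑ k, (a • q1 + b • q2) k * u ℓ * max (f ℓ k - ζ) 0
      = a * (∑ ℓ, ∑ k, q1 k * u ℓ * max (f ℓ k - ζ) 0)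
        + b * (∑ ℓ, ∑ k, q2 k * u ℓ * max (f ℓ k - ζ) 0) := by
    rw [Finset.mul_sum, Finset.mul_sum, ← Finset.sum_add_distrib]
    refine Finset.sum_congr rfl fun ℓ _ => ?_
    rw [Finset.mul_sum, Finset.mul_sum, ← Finset.sum_add_distrib]
    refine Finset.sum_congr rfl fun k _ => ?_
    simp only [Pi.add_apply, Pi.smul_apply, smul_eq_mul]
    ring
  rw [hsum]
  linear_combination (-ζ) * hab

lemma gfun_convexOn (hc0 : 0 ≤ c) (u : L → ℝ) (hu : ∀ ℓ, 0 ≤ u ℓ)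
    (q : K → ℝ) (hq : ∀ k, 0 ≤ q k) :
    ConvexOn ℝ univ (gfun c f u q) := by
  refine ⟨convex_univ, ?_⟩
  intro x _ y _ a b ha hb hab
  simp only [smul_eq_mul]
  unfold gfun
  have key : ∀ ℓ k, q k * u ℓ * max (f ℓ k - (a * x + b * y)) 0
      ≤ a * (q k * u ℓ * max (f ℓ k - x) 0) + b * (q k * u ℓ * max (f ℓ k - y) 0) := by
    intro ℓ k
    have hqu : (0:ℝ) ≤ q k * u ℓ := mul_nonneg (hq k) (hu ℓ)
    have hmax : max (f ℓ k - (a * x + b * y)) 0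
        ≤ a * max (f ℓ k - x) 0 + b * max (f ℓ k - y) 0 := by
      refine max_le ?_ ?_
      · have h1 : f ℓ k - (a * x + b * y) = a * (f ℓ k - x) + b * (f ℓ k - y) := by
          linear_combination (f ℓ k) * hab.symm
        rw [h1]
        exact add_le_add (mul_le_mul_of_nonneg_left (le_max_left _ _) ha)
          (mul_le_mul_of_nonneg_left (le_max_left _ _) hb)
      · exact add_nonneg (mul_nonneg ha (le_max_right _ _))
          (mul_nonneg hb (le_max_right _ _))
    calc q k * u ℓ * max (f ℓ k - (a * x + b * y)) 0
        ≤ q k * u ℓ * (a * max (f ℓ k - x) 0 + b * max (f ℓ k - y) 0) :=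
          mul_le_mul_of_nonneg_left hmax hqu
      _ = a * (q k * u ℓ * max (f ℓ k - x) 0) + b * (q k * u ℓ * max (f ℓ k - y) 0) := by
          ring
  have hsum : ∑ ℓ, ∑ k, q k * u ℓ * max (f ℓ k - (a * x + b * y)) 0
      ≤ a * (∑ ℓ, ∑ k, q k * u ℓ * max (f ℓ k - x) 0)
        + b * (∑ ℓ, ∑ k, q k * u ℓ * max (f ℓ k - y) 0) := by
    rw [Finset.mul_sum, Finset.mul_sum, ← Finset.sum_add_distrib]
    refine Finset.sum_le_sum fun ℓ _ => ?_
    rw [Finset.mul_sum, Finset.mul_sum, ← Finset.sum_add_distrib]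
    exact Finset.sum_le_sum fun k _ => key ℓ k
  have := mul_le_mul_of_nonneg_left hsum hc0
  nlinarith [this]
end more

theorem drni_aux {L K : Type*} [Fintype L] [Fintype K]
    (c : ℝ) (hc1 : 1 ≤ c)
    (f : L → K → ℝ) (ζbar : ℝ) (hζbar : 0 ≤ ζbar)
    (hf : ∀ ℓ k, 0 ≤ f ℓ k ∧ f ℓ k ≤ ζbar)
    (Q : Set (K → ℝ)) (hQsub : Q ⊆ stdSimplex ℝ K)
    (hQne : Q.Nonempty) (hQconvex : Convex ℝ Q) :
    sInf {z : ℝ | ∃ u ∈ stdSimplex ℝ L,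
        z = sSup {cv : ℝ | ∃ q ∈ Q, cv = sInf {x : ℝ | ∃ ζ : ℝ, x = gfun c f u q ζ}}}
    = sInf {t : ℝ | ∃ (u : L → ℝ) (ζ : ℝ) (Δ : L → K → ℝ) (η : L → ℝ),
        (∀ q ∈ Q, ζ + c * ∑ ℓ, ∑ k, q k * Δ ℓ k ≤ t) ∧
        (∀ ℓ k, u ℓ * f ℓ k - η ℓ ≤ Δ ℓ k) ∧
        (∀ ℓ, η ℓ = u ℓ * ζ) ∧
        (∀ ℓ k, 0 ≤ Δ ℓ k) ∧
        (∀ ℓ, 0 ≤ u ℓ) ∧ (∑ ℓ, u ℓ = 1) ∧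
        0 ≤ ζ ∧ ζ ≤ ζbar} := by
  classical
  have hc0 : (0:ℝ) < c := lt_of_lt_of_le one_pos hc1
  obtain ⟨q0, hq0Q⟩ := hQne
  rcases isEmpty_or_nonempty L with hL | hL
  · -- degenerate case : both sets are empty
    have hA : {z : ℝ | ∃ u ∈ stdSimplex ℝ L,
        z = sSup {cv : ℝ | ∃ q ∈ Q, cv = sInf {x : ℝ | ∃ ζ : ℝ, x = gfun c f u q ζ}}} = ∅ := by
      refine eq_empty_iff_forall_notMem.2 ?_
      rintro z ⟨u, hu, -⟩
      have := hu.2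
      simp [Finset.univ_eq_empty] at this
    have hB : {t : ℝ | ∃ (u : L → ℝ) (ζ : ℝ) (Δ : L → K → ℝ) (η : L → ℝ),
        (∀ q ∈ Q, ζ + c * ∑ ℓ, ∑ k, q k * Δ ℓ k ≤ t) ∧
        (∀ ℓ k, u ℓ * f ℓ k - η ℓ ≤ Δ ℓ k) ∧
        (∀ ℓ, η ℓ = u ℓ * ζ) ∧
        (∀ ℓ k, 0 ≤ Δ ℓ k) ∧
        (∀ ℓ, 0 ≤ u ℓ) ∧ (∑ ℓ, u ℓ = 1) ∧
        0 ≤ ζ ∧ ζ ≤ ζbar} = ∅ := by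
      refine eq_empty_iff_forall_notMem.2 ?_
      rintro t ⟨u, ζ, Δ, η, -, -, -, -, -, h6, -⟩
      simp [Finset.univ_eq_empty] at h6
    rw [hA, hB]
  -- main case
  have hq_nn : ∀ q ∈ Q, ∀ k, 0 ≤ q k := fun q hq k => (hQsub hq).1 k
  -- nonnegativity of gfun
  have hglb : ∀ u ∈ stdSimplex ℝ L, ∀ q ∈ stdSimplex ℝ K, ∀ ζ, 0 ≤ gfun c f u q ζ := by
    intro u hu q hq ζ
    obtain ⟨ζ', hI', hle⟩ := gfun_clamp hc1 hζbar hf u hu q hq ζ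
    have h0 : 0 ≤ gfun c f u q ζ' := by
      have := sum_max_nonneg f u q hu.1 hq.1 ζ'
      unfold gfun
      nlinarith [hI'.1]
    linarith
  have hIbdd : ∀ u ∈ stdSimplex ℝ L, ∀ q ∈ stdSimplex ℝ K,
      BddBelow {x : ℝ | ∃ ζ : ℝ, x = gfun c f u q ζ} := by
    intro u hu q hq
    exact ⟨0, by rintro x ⟨ζ, rfl⟩; exact hglb u hu q hq ζ⟩
  -- attainment of the inner infimum on [0, ζbar]
  have hmin : ∀ u ∈ stdSimplex ℝ L, ∀ q ∈ stdSimplex ℝ K,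
      ∃ ζq ∈ Icc (0:ℝ) ζbar,
        sInf {x : ℝ | ∃ ζ : ℝ, x = gfun c f u q ζ} = gfun c f u q ζq := by
    intro u hu q hq
    obtain ⟨ζq, hζqI, hminOn⟩ := isCompact_Icc.exists_isMinOn (nonempty_Icc.2 hζbar)
      (gfun_cont c f u q).continuousOn
    refine ⟨ζq, hζqI, le_antisymm (csInf_le (hIbdd u hu q hq) ⟨ζq, rfl⟩) ?_⟩
    refine le_csInf ⟨gfun c f u q 0, 0, rfl⟩ ?_
    rintro x ⟨ζ, rfl⟩
    obtain ⟨ζ', hI', hle⟩ := gfun_clamp hc1 hζbar hf u hu q hq ζ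
    exact le_trans (hminOn hI') hle
  -- upper and lower bounds on the CVaR
  have hCVaRub : ∀ u ∈ stdSimplex ℝ L, ∀ q ∈ stdSimplex ℝ K,
      sInf {x : ℝ | ∃ ζ : ℝ, x = gfun c f u q ζ} ≤ ζbar := by
    intro u hu q hq
    refine le_trans (csInf_le (hIbdd u hu q hq) ⟨ζbar, rfl⟩) ?_
    rw [gfun_at_bar hf]
  have hCVaRnn : ∀ u ∈ stdSimplex ℝ L, ∀ q ∈ stdSimplex ℝ K,
      0 ≤ sInf {x : ℝ | ∃ ζ : ℝ, x = gfun c f u q ζ} := by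
    intro u hu q hq
    refine le_csInf ⟨gfun c f u q 0, 0, rfl⟩ ?_
    rintro x ⟨ζ, rfl⟩
    exact hglb u hu q hq ζ
  have hCbdd : ∀ u ∈ stdSimplex ℝ L,
      BddAbove {cv : ℝ | ∃ q ∈ Q, cv = sInf {x : ℝ | ∃ ζ : ℝ, x = gfun c f u q ζ}} := by
    intro u hu
    exact ⟨ζbar, by rintro cv ⟨q, hq, rfl⟩; exact hCVaRub u hu q (hQsub hq)⟩
  have hCne : ∀ u : L → ℝ,
      {cv : ℝ | ∃ q ∈ Q, cv = sInf {x : ℝ | ∃ ζ : ℝ, x = gfun c f u q ζ}}.Nonempty :=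
    fun u => ⟨_, q0, hq0Q, rfl⟩
  -- nonemptiness and lower bounds of the two feasible-value sets
  set u0 : L → ℝ := Pi.single (Classical.arbitrary L) 1 with hu0def
  have hu0 : u0 ∈ stdSimplex ℝ L := single_mem_stdSimplex ℝ _
  have hAne : {z : ℝ | ∃ u ∈ stdSimplex ℝ L,
      z = sSup {cv : ℝ | ∃ q ∈ Q, cv = sInf {x : ℝ | ∃ ζ : ℝ, x = gfun c f u q ζ}}}.Nonempty :=
    ⟨_, u0, hu0, rfl⟩
  have hsumf : ∀ u ∈ stdSimplex ℝ L, ∀ q ∈ Q, ∑ ℓ, ∑ k, q k * (u ℓ * f ℓ k) ≤ ζbar := by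
    intro u hu q hq
    calc ∑ ℓ, ∑ k, q k * (u ℓ * f ℓ k) ≤ ∑ ℓ, ∑ k, q k * u ℓ * ζbar := by
          refine Finset.sum_le_sum fun ℓ _ => Finset.sum_le_sum fun k _ => ?_
          have h1 : q k * (u ℓ * f ℓ k) = q k * u ℓ * f ℓ k := by ring
          rw [h1]
          exact mul_le_mul_of_nonneg_left (hf ℓ k).2 (mul_nonneg (hq_nn q hq k) (hu.1 ℓ))
      _ = (∑ ℓ, ∑ k, q k * u ℓ) * ζbar := by
          rw [Finset.sum_mul]
          exact Finset.sum_congr rfl fun ℓ _ => by rw [Finset.sum_mul]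
      _ = ζbar := by rw [sum_qu_eq_one u hu.2 q ((hQsub hq).2), one_mul]
  have hBne : {t : ℝ | ∃ (u : L → ℝ) (ζ : ℝ) (Δ : L → K → ℝ) (η : L → ℝ),
      (∀ q ∈ Q, ζ + c * ∑ ℓ, ∑ k, q k * Δ ℓ k ≤ t) ∧
      (∀ ℓ k, u ℓ * f ℓ k - η ℓ ≤ Δ ℓ k) ∧
      (∀ ℓ, η ℓ = u ℓ * ζ) ∧
      (∀ ℓ k, 0 ≤ Δ ℓ k) ∧
      (∀ ℓ, 0 ≤ u ℓ) ∧ (∑ ℓ, u ℓ = 1) ∧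
      0 ≤ ζ ∧ ζ ≤ ζbar}.Nonempty := by
    refine ⟨c * ζbar, u0, 0, fun ℓ k => u0 ℓ * f ℓ k, fun _ => 0, ?_, ?_, ?_, ?_, hu0.1, hu0.2,
      le_refl 0, hζbar⟩
    · intro q hq
      have := hsumf u0 hu0 q hq
      nlinarith
    · intro ℓ k
      simp
    · intro ℓ
      simp
    · intro ℓ k
      exact mul_nonneg (hu0.1 ℓ) (hf ℓ k).1
  have hAbdd : BddBelow {z : ℝ | ∃ u ∈ stdSimplex ℝ L,
      z = sSup {cv : ℝ | ∃ q ∈ Q, cv = sInf {x : ℝ | ∃ ζ : ℝ, x = gfun c f u q ζ}}} := by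
    refine ⟨0, ?_⟩
    rintro z ⟨u, hu, rfl⟩
    exact le_trans (hCVaRnn u hu q0 (hQsub hq0Q)) (le_csSup (hCbdd u hu) ⟨q0, hq0Q, rfl⟩)
  have hBbdd : BddBelow {t : ℝ | ∃ (u : L → ℝ) (ζ : ℝ) (Δ : L → K → ℝ) (η : L → ℝ),
      (∀ q ∈ Q, ζ + c * ∑ ℓ, ∑ k, q k * Δ ℓ k ≤ t) ∧
      (∀ ℓ k, u ℓ * f ℓ k - η ℓ ≤ Δ ℓ k) ∧
      (∀ ℓ, η ℓ = u ℓ * ζ) ∧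
      (∀ ℓ k, 0 ≤ Δ ℓ k) ∧
      (∀ ℓ, 0 ≤ u ℓ) ∧ (∑ ℓ, u ℓ = 1) ∧
      0 ≤ ζ ∧ ζ ≤ ζbar} := by
    refine ⟨0, ?_⟩
    rintro t ⟨u, ζ, Δ, η, h1, h2, h3, h4, h5, h6, h7, h8⟩
    have hs : 0 ≤ ∑ ℓ, ∑ k, q0 k * Δ ℓ k :=
      Finset.sum_nonneg fun ℓ _ => Finset.sum_nonneg fun k _ =>
        mul_nonneg (hq_nn q0 hq0Q k) (h4 ℓ k)
    have := h1 q0 hq0Q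
    nlinarith
  refine le_antisymm ?_ ?_
  · -- LHS ≤ RHS (weak duality)
    refine le_csInf hBne ?_
    rintro t ⟨u, ζ, Δ, η, h1, h2, h3, h4, h5, h6, h7, h8⟩
    have hu : u ∈ stdSimplex ℝ L := ⟨h5, h6⟩
    refine le_trans (csInf_le hAbdd ⟨u, hu, rfl⟩) ?_
    refine csSup_le (hCne u) ?_
    rintro cv ⟨q, hqQ, rfl⟩
    refine le_trans (csInf_le (hIbdd u hu q (hQsub hqQ)) ⟨ζ, rfl⟩)
      (le_trans ?_ (h1 q hqQ))
    unfold gfun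
    have hterm : ∀ ℓ k, q k * u ℓ * max (f ℓ k - ζ) 0 ≤ q k * Δ ℓ k := by
      intro ℓ k
      have hin : u ℓ * max (f ℓ k - ζ) 0 ≤ Δ ℓ k := by
        rw [mul_max_of_nonneg _ _ (h5 ℓ), mul_zero]
        refine max_le ?_ (h4 ℓ k)
        have h2' := h2 ℓ k
        rw [h3 ℓ] at h2'
        nlinarith
      calc q k * u ℓ * max (f ℓ k - ζ) 0 = q k * (u ℓ * max (f ℓ k - ζ) 0) := by ring
        _ ≤ q k * Δ ℓ k := mul_le_mul_of_nonneg_left hin (hq_nn q hqQ k)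
    have hsum : ∑ ℓ, ∑ k, q k * u ℓ * max (f ℓ k - ζ) 0 ≤ ∑ ℓ, ∑ k, q k * Δ ℓ k :=
      Finset.sum_le_sum fun ℓ _ => Finset.sum_le_sum fun k _ => hterm ℓ k
    nlinarith [mul_le_mul_of_nonneg_left hsum hc0.le]
  · -- RHS ≤ LHS (via the minimax lemma)
    refine le_csInf hAne ?_
    rintro z ⟨u, hu, rfl⟩
    have hfeas : ∀ q ∈ Q, ∃ ζ ∈ Icc (0:ℝ) ζbar, gfun c f u q ζ
        ≤ sSup {cv : ℝ | ∃ q ∈ Q, cv = sInf {x : ℝ | ∃ ζ : ℝ, x = gfun c f u q ζ}} := by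
      intro q hqQ
      obtain ⟨ζq, hI, heq⟩ := hmin u hu q (hQsub hqQ)
      exact ⟨ζq, hI, heq ▸ le_csSup (hCbdd u hu) ⟨q, hqQ, rfl⟩⟩
    obtain ⟨ζs, hζsI, hub⟩ := minimax_1d Q hQconvex ζbar hζbar (gfun c f u) _
      (fun q _ => gfun_cont c f u q)
      (fun q hq => gfun_convexOn hc0.le u hu.1 q (hq_nn q hq))
      (fun q1 h1 q2 h2 a b _ _ hab ζ => gfun_affine u q1 q2 a b hab ζ)
      hfeas
    refine csInf_le hBbdd ⟨u, ζs, fun ℓ k => u ℓ * max (f ℓ k - ζs) 0,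
      fun ℓ => u ℓ * ζs, ?_, ?_, fun ℓ => rfl, ?_, hu.1, hu.2, hζsI.1, hζsI.2⟩
    · intro q hq
      have h := hub q hq
      unfold gfun at h
      have he : ∑ ℓ, ∑ k, q k * (u ℓ * max (f ℓ k - ζs) 0)
          = ∑ ℓ, ∑ k, q k * u ℓ * max (f ℓ k - ζs) 0 :=
        Finset.sum_congr rfl fun ℓ _ => Finset.sum_congr rfl fun k _ => by ring
      rw [he]
      exact h
    · intro ℓ k
      have h1 : u ℓ * (f ℓ k - ζs) ≤ u ℓ * max (f ℓ k - ζs) 0 :=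
        mul_le_mul_of_nonneg_left (le_max_left _ _) (hu.1 ℓ)
      show u ℓ * f ℓ k - u ℓ * ζs ≤ u ℓ * max (f ℓ k - ζs) 0
      nlinarith
    · intro ℓ k
      exact mul_nonneg (hu.1 ℓ) (le_max_right _ _)



/-- Proposition 1: for a nonempty, closed, convex `Q ⊆ Δ_K`, the
optimal value of the DRNI problem `min_{u∈Δ_L} sup_{q∈Q} CVaR^α(u,q)` equals the
optimal value of the bi-convex epigraph reformulation. -/
theorem drni_biconvex_reformulation {L K : Type*} [Fintype L] [Fintype K]
    (α : ℝ) (hα0 : 0 ≤ α) (hα1 : α < 1)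
    (f : L → K → ℝ) (ζbar : ℝ) (hζbar : 0 ≤ ζbar)
    (hf : ∀ ℓ k, 0 ≤ f ℓ k ∧ f ℓ k ≤ ζbar)
    (Q : Set (K → ℝ)) (hQsub : Q ⊆ stdSimplex ℝ K)
    (hQne : Q.Nonempty) (hQclosed : IsClosed Q) (hQconvex : Convex ℝ Q) :
    sInf {z : ℝ | ∃ u ∈ stdSimplex ℝ L,
        z = sSup {c : ℝ | ∃ q ∈ Q,
          c = sInf {x : ℝ | ∃ ζ : ℝ,
            x = ζ + (1 / (1 - α)) * ∑ ℓ, ∑ k, q k * u ℓ * max (f ℓ k - ζ) 0}}}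
    = sInf {t : ℝ | ∃ (u : L → ℝ) (ζ : ℝ) (Δ : L → K → ℝ) (η : L → ℝ),
        (∀ q ∈ Q, ζ + (1 / (1 - α)) * ∑ ℓ, ∑ k, q k * Δ ℓ k ≤ t) ∧
        (∀ ℓ k, u ℓ * f ℓ k - η ℓ ≤ Δ ℓ k) ∧
        (∀ ℓ, η ℓ = u ℓ * ζ) ∧
        (∀ ℓ k, 0 ≤ Δ ℓ k) ∧
        (∀ ℓ, 0 ≤ u ℓ) ∧ (∑ ℓ, u ℓ = 1) ∧
        0 ≤ ζ ∧ ζ ≤ ζbar} := by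
  have h1α : (0:ℝ) < 1 - α := by linarith
  have hc1 : 1 ≤ 1 / (1 - α) := by
    rw [le_div_iff₀ h1α]
    linarith
  have h := drni_aux (L := L) (K := K) (1 / (1 - α)) hc1 f ζbar hζbar hf Q hQsub hQne hQconvex
  simpa only [gfun] using h
end

section
/- Let K be a finite index set, q̂ ∈ Δ_K, q̄ ∈ ℝ^K with q̄ ≥ 0, Γ ≥ 0, and γ ∈ ℝ^K. Then the worst-case expectation over the budgeted ambiguity set satisfies the strong-duality identity: sup_{q∈Q} Σ_{k∈K} q_k γ_k = inf over w ∈ ℝ^K, w⁻ ∈ ℝ^K, χ ∈ ℝ, β ∈ ℝ^K of [ Σ_{k∈K} w_k + Σ_{k∈K} w⁻_k + Γχ + Σ_{k∈K} q̂_k β_k + max_{k∈K}(γ_k − β_k) ] subject to χ ≥ q̄_k β_k − w_k for all k, χ ≥ −q̄_k β_k − w⁻_k for all k, w ≥ 0, w⁻ ≥ 0, χ ≥ 0; moreover both optimal values are attained and the supremum is finite (Q is nonempty since q̂ ∈ Q). -/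
open Finset


private lemma sum_dite_zero {I : Type*} [Fintype I] (p : I → Prop) [DecidablePred p]
    (f : ∀ i, p i → ℝ) :
    ∑ i, (if h : p i then f i h else 0) = ∑ z : Subtype p, f z.1 z.2 := by
  classical
  rw [← Finset.sum_filter_add_sum_filter_not Finset.univ p]
  have h2 : ∑ i ∈ Finset.univ.filter (fun i => ¬ p i), (if h : p i then f i h else 0) = 0 :=
    Finset.sum_eq_zero fun i hi => by rw [dif_neg (Finset.mem_filter.mp hi).2]
  rw [h2, add_zero,
    Finset.sum_subtype (p := p) (Finset.univ.filter p)
      (fun x => by simp only [Finset.mem_filter, Finset.mem_univ, true_and])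
      (fun i => if h : p i then f i h else 0)]
  exact Finset.sum_congr rfl fun z _ => dif_pos z.2

universe v

private theorem farkas_fin (n : ℕ) : ∀ {I : Type v} [Fintype I] (A : I → Fin n → ℝ) (b : I → ℝ),
    (¬ ∃ x : Fin n → ℝ, ∀ i, ∑ j, A i j * x j ≤ b i) →
    ∃ y : I → ℝ, (∀ i, 0 ≤ y i) ∧ (∀ j, ∑ i, y i * A i j = 0) ∧ ∑ i, y i * b i < 0 := by
  induction n with
  | zero =>
    intro I _ A b h
    by_cases hb : ∀ i, 0 ≤ b i
    · exact absurd ⟨fun j => 0, fun i => by simpa using hb i⟩ h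
    · push_neg at hb
      obtain ⟨i₀, hi₀⟩ := hb
      classical
      refine ⟨fun i => if i = i₀ then 1 else 0, fun i => by dsimp only; split <;> norm_num,
        fun j => j.elim0, ?_⟩
      simpa [ite_mul] using hi₀
  | succ n ih =>
    intro I _ A b h
    classical
    set r : I → (Fin n → ℝ) → ℝ := fun i x => ∑ j : Fin n, A i j.succ * x j with hr
    set A₂ : ({i : I // A i 0 = 0} ⊕ {i : I // 0 < A i 0} × {i : I // A i 0 < 0}) → Fin n → ℝ :=
      Sum.elim (fun z j => A z.1 j.succ)
        (fun pm j => A pm.1.1 j.succ / A pm.1.1 0 - A pm.2.1 j.succ / A pm.2.1 0) with hA₂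
    set b₂ : ({i : I // A i 0 = 0} ⊕ {i : I // 0 < A i 0} × {i : I // A i 0 < 0}) → ℝ :=
      Sum.elim (fun z => b z.1) (fun pm => b pm.1.1 / A pm.1.1 0 - b pm.2.1 / A pm.2.1 0) with hb₂
    have hrow : ∀ (x : Fin n → ℝ) (p : {i : I // 0 < A i 0}) (m : {i : I // A i 0 < 0}),
        ∑ j, A₂ (Sum.inr (p, m)) j * x j = r p.1 x / A p.1 0 - r m.1 x / A m.1 0 := by
      intro x p m
      simp only [hA₂, Sum.elim_inr, sub_mul, hr, Finset.sum_sub_distrib, Finset.sum_div]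
      congr 1 <;> · exact Finset.sum_congr rfl fun j _ => by ring
    have htrans : (∃ x : Fin n → ℝ, ∀ i₂, ∑ j, A₂ i₂ j * x j ≤ b₂ i₂) →
        ∃ x : Fin (n+1) → ℝ, ∀ i, ∑ j, A i j * x j ≤ b i := by
      rintro ⟨x, hx⟩
      set UB : {i : I // 0 < A i 0} → ℝ := fun p => (b p.1 - r p.1 x) / A p.1 0 with hUB
      set LB : {i : I // A i 0 < 0} → ℝ := fun m => (b m.1 - r m.1 x) / A m.1 0 with hLB
      have hLU : ∀ p m, LB m ≤ UB p := by
        intro p m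
        have h1 := hx (Sum.inr (p, m))
        rw [hrow] at h1
        simp only [hb₂, Sum.elim_inr] at h1
        simp only [hUB, hLB, sub_div]
        linarith
      obtain ⟨x₀, hub, hlb⟩ : ∃ x₀ : ℝ, (∀ p, x₀ ≤ UB p) ∧ (∀ m, LB m ≤ x₀) := by
        by_cases hP : Nonempty {i : I // 0 < A i 0}
        · refine ⟨Finset.univ.inf' Finset.univ_nonempty UB,
            fun p => Finset.inf'_le _ (Finset.mem_univ p), fun m => Finset.le_inf' _ _ ?_⟩
          exact fun p _ => hLU p m
        · by_cases hN : Nonempty {i : I // A i 0 < 0}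
          · exact ⟨Finset.univ.sup' Finset.univ_nonempty LB,
              fun p => absurd ⟨p⟩ hP, fun m => Finset.le_sup' _ (Finset.mem_univ m)⟩
          · exact ⟨0, fun p => absurd ⟨p⟩ hP, fun m => absurd ⟨m⟩ hN⟩
      refine ⟨Fin.cons x₀ x, fun i => ?_⟩
      rw [Fin.sum_univ_succ]
      simp only [Fin.cons_zero, Fin.cons_succ]
      have hri : ∑ j : Fin n, A i j.succ * x j = r i x := rfl
      rw [hri]
      rcases lt_trichotomy (A i 0) 0 with hi | hi | hi
      · have h1 := hlb ⟨i, hi⟩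
        rw [hLB, div_le_iff_of_neg hi] at h1
        nlinarith
      · have h1 := hx (Sum.inl ⟨i, hi⟩)
        simp only [hA₂, hb₂, Sum.elim_inl] at h1
        rw [hi]
        linarith [h1]
      · have h1 := hub ⟨i, hi⟩
        rw [hUB, le_div_iff₀ hi] at h1
        nlinarith
    have h₂ : ¬ ∃ x : Fin n → ℝ, ∀ i₂, ∑ j, A₂ i₂ j * x j ≤ b₂ i₂ := fun hx => h (htrans hx)
    obtain ⟨y₂, hy₂0, hy₂A, hy₂b⟩ := ih A₂ b₂ h₂
    set y : I → ℝ := fun i =>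
      (if h : A i 0 = 0 then y₂ (Sum.inl ⟨i, h⟩) else 0)
      + (if h : 0 < A i 0 then (∑ m : {i : I // A i 0 < 0}, y₂ (Sum.inr (⟨i, h⟩, m))) / A i 0
          else 0)
      + (if h : A i 0 < 0 then (∑ p : {i : I // 0 < A i 0}, y₂ (Sum.inr (p, ⟨i, h⟩))) / (-A i 0)
          else 0) with hy
    have key : ∀ g : I → ℝ, ∑ i, y i * g i =
        (∑ z : {i : I // A i 0 = 0}, y₂ (Sum.inl z) * g z.1)
        + ∑ pm : {i : I // 0 < A i 0} × {i : I // A i 0 < 0},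
            y₂ (Sum.inr pm) * (g pm.1.1 / A pm.1.1 0 - g pm.2.1 / A pm.2.1 0) := by
      intro g
      have e1 : ∀ i, y i * g i =
          (if h : A i 0 = 0 then y₂ (Sum.inl ⟨i, h⟩) * g i else 0)
          + ((if h : 0 < A i 0 then
              (∑ m : {i : I // A i 0 < 0}, y₂ (Sum.inr (⟨i, h⟩, m))) / A i 0 * g i else 0)
          + (if h : A i 0 < 0 then
              (∑ p : {i : I // 0 < A i 0}, y₂ (Sum.inr (p, ⟨i, h⟩))) / (-A i 0) * g i else 0)) := by
        intro i
        simp only [hy]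
        split <;> split <;> split <;> ring
      rw [Finset.sum_congr rfl fun i _ => e1 i, Finset.sum_add_distrib, Finset.sum_add_distrib,
        sum_dite_zero, sum_dite_zero, sum_dite_zero]
      have e2 : (∑ p : {i : I // 0 < A i 0},
            (∑ m : {i : I // A i 0 < 0}, y₂ (Sum.inr (⟨p.1, p.2⟩, m))) / A p.1 0 * g p.1)
          = ∑ p : {i : I // 0 < A i 0}, ∑ m : {i : I // A i 0 < 0},
              y₂ (Sum.inr (p, m)) * (g p.1 / A p.1 0) := by
        refine Finset.sum_congr rfl fun p _ => ?_
        rw [Finset.sum_div, Finset.sum_mul]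
        exact Finset.sum_congr rfl fun m _ => by ring
      have e3 : (∑ m : {i : I // A i 0 < 0},
            (∑ p : {i : I // 0 < A i 0}, y₂ (Sum.inr (p, ⟨m.1, m.2⟩))) / (-A m.1 0) * g m.1)
          = ∑ p : {i : I // 0 < A i 0}, ∑ m : {i : I // A i 0 < 0},
              y₂ (Sum.inr (p, m)) * (-(g m.1 / A m.1 0)) := by
        rw [Finset.sum_comm]
        refine Finset.sum_congr rfl fun m _ => ?_
        rw [div_neg, neg_mul, Finset.sum_div, Finset.sum_mul, ← Finset.sum_neg_distrib]
        exact Finset.sum_congr rfl fun p _ => by ring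
      rw [e2, e3, Fintype.sum_prod_type, ← Finset.sum_add_distrib]
      congr 1
      refine Finset.sum_congr rfl fun p _ => ?_
      rw [← Finset.sum_add_distrib]
      exact Finset.sum_congr rfl fun m _ => by ring
    refine ⟨y, ?_, ?_, ?_⟩
    · intro i
      simp only [hy]
      refine add_nonneg (add_nonneg ?_ ?_) ?_
      · split
        · exact hy₂0 _
        · exact le_rfl
      · split
        · next hpos => exact div_nonneg (Finset.sum_nonneg fun m _ => hy₂0 _) hpos.le
        · exact le_rfl
      · split
        · next hneg => exact div_nonneg (Finset.sum_nonneg fun p _ => hy₂0 _) (by linarith)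
        · exact le_rfl
    · intro j
      induction j using Fin.cases with
      | zero =>
        rw [key fun i => A i 0]
        have z1 : ∀ z : {i : I // A i 0 = 0}, y₂ (Sum.inl z) * A z.1 0 = 0 := by
          intro z; rw [z.2, mul_zero]
        have z2 : ∀ pm : {i : I // 0 < A i 0} × {i : I // A i 0 < 0},
            y₂ (Sum.inr pm) * (A pm.1.1 0 / A pm.1.1 0 - A pm.2.1 0 / A pm.2.1 0) = 0 := by
          intro pm
          rw [div_self pm.1.2.ne', div_self pm.2.2.ne, sub_self, mul_zero]
        rw [Finset.sum_congr rfl fun z _ => z1 z, Finset.sum_congr rfl fun pm _ => z2 pm]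
        simp
      | succ j =>
        rw [key fun i => A i j.succ]
        have := hy₂A j
        rw [Fintype.sum_sum_type] at this
        exact this
    · rw [key b]
      have := hy₂b
      rw [Fintype.sum_sum_type] at this
      exact this


private theorem farkas' {J : Type u} {I : Type v} [Fintype J] [Fintype I]
    (A : I → J → ℝ) (b : I → ℝ)
    (h : ¬ ∃ x : J → ℝ, ∀ i, ∑ j, A i j * x j ≤ b i) :
    ∃ y : I → ℝ, (∀ i, 0 ≤ y i) ∧ (∀ j, ∑ i, y i * A i j = 0) ∧ ∑ i, y i * b i < 0 := by
  classical
  set e := Fintype.equivFin J with he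
  have h' : ¬ ∃ x : Fin (Fintype.card J) → ℝ, ∀ i, ∑ j', A i (e.symm j') * x j' ≤ b i := by
    rintro ⟨x, hx⟩
    refine h ⟨fun j => x (e j), fun i => ?_⟩
    refine le_trans (le_of_eq (Fintype.sum_equiv e _ _ fun j => by simp)) (hx i)
  obtain ⟨y, hy0, hyA, hyb⟩ := farkas_fin _ (fun i j' => A i (e.symm j')) b h'
  refine ⟨y, hy0, fun j => ?_, hyb⟩
  have := hyA (e j)
  simpa using this


private lemma weak_duality {K : Type u} [Fintype K] [Nonempty K]
    (qhat qbar : K → ℝ) (Γ : ℝ) (γ : K → ℝ)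
    (w wm β : K → ℝ) (χ : ℝ)
    (h1 : ∀ k, qbar k * β k - w k ≤ χ) (h2 : ∀ k, -(qbar k * β k) - wm k ≤ χ)
    (hw : ∀ k, 0 ≤ w k) (hwm : ∀ k, 0 ≤ wm k) (hχ : 0 ≤ χ)
    (z q : K → ℝ) (hz : ∀ k, -1 ≤ z k ∧ z k ≤ 1) (hzΓ : ∑ k, |z k| ≤ Γ)
    (hq : ∀ k, q k = qhat k + qbar k * z k) (hq0 : ∀ k, 0 ≤ q k) (hq1 : ∑ k, q k = 1) :
    ∑ k, q k * γ k ≤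
      (∑ k, w k) + (∑ k, wm k) + Γ * χ + (∑ k, qhat k * β k) + (⨆ k, (γ k - β k)) := by
  have hbdd : BddAbove (Set.range fun k => γ k - β k) :=
    Set.Finite.bddAbove (Set.finite_range _)
  set s := ⨆ k, (γ k - β k) with hs
  have hsle : ∀ k, γ k - β k ≤ s := fun k => le_ciSup hbdd k
  have keyz : ∀ k, z k * (qbar k * β k) ≤ |z k| * χ + w k + wm k := by
    intro k
    rcases le_or_gt 0 (z k) with hzk | hzk
    · have e1 : z k * (qbar k * β k) ≤ z k * (χ + w k) :=
        mul_le_mul_of_nonneg_left (by linarith [h1 k]) hzk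
      have e2 : z k * w k ≤ w k := mul_le_of_le_one_left (hw k) (hz k).2
      rw [abs_of_nonneg hzk]
      nlinarith [hwm k]
    · have e1 : (-z k) * (-(qbar k * β k)) ≤ (-z k) * (χ + wm k) :=
        mul_le_mul_of_nonneg_left (by linarith [h2 k]) (by linarith)
      have e2 : (-z k) * wm k ≤ wm k :=
        mul_le_of_le_one_left (hwm k) (by linarith [(hz k).1])
      rw [abs_of_neg hzk]
      nlinarith [hw k]
  have keyk : ∀ k, q k * γ k ≤ q k * s + qhat k * β k + (|z k| * χ + w k + wm k) := by
    intro k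
    have e1 : q k * (γ k - β k) ≤ q k * s := mul_le_mul_of_nonneg_left (hsle k) (hq0 k)
    have e2 : q k * β k = qhat k * β k + z k * (qbar k * β k) := by rw [hq k]; ring
    nlinarith [keyz k]
  calc ∑ k, q k * γ k
      ≤ ∑ k, (q k * s + qhat k * β k + (|z k| * χ + w k + wm k)) :=
        Finset.sum_le_sum fun k _ => keyk k
    _ = (∑ k, q k) * s + (∑ k, qhat k * β k) + ((∑ k, |z k|) * χ + (∑ k, w k) + (∑ k, wm k)) := by
        simp [Finset.sum_add_distrib, Finset.sum_mul]
    _ ≤ 1 * s + (∑ k, qhat k * β k) + (Γ * χ + (∑ k, w k) + (∑ k, wm k)) := by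
        rw [hq1]
        have := mul_le_mul_of_nonneg_right hzΓ hχ
        linarith
    _ = (∑ k, w k) + (∑ k, wm k) + Γ * χ + (∑ k, qhat k * β k) + s := by ring

private lemma primal_attained {K : Type u} [Fintype K] [Nonempty K]
    (qhat : K → ℝ) (hqhat : qhat ∈ stdSimplex ℝ K)
    (qbar : K → ℝ) (Γ : ℝ) (hΓ : 0 ≤ Γ) (γ : K → ℝ) :
    ∃ M : ℝ,
      IsGreatest {x : ℝ | ∃ q : K → ℝ,
          (∃ z : K → ℝ, (∀ k, -1 ≤ z k ∧ z k ≤ 1) ∧ (∑ k, |z k| ≤ Γ) ∧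
            (∀ k, q k = qhat k + qbar k * z k) ∧ (∀ k, 0 ≤ q k) ∧ (∑ k, q k = 1)) ∧
          x = ∑ k, q k * γ k} M := by
  classical
  set T : Set (K → ℝ) := {z | (∀ k, -1 ≤ z k ∧ z k ≤ 1) ∧ ((∑ k, |z k| ≤ Γ) ∧
      ((∀ k, 0 ≤ qhat k + qbar k * z k) ∧ (∑ k, (qhat k + qbar k * z k)) = 1))} with hT
  have hsub : T ⊆ Set.pi Set.univ (fun _ => Set.Icc (-1:ℝ) 1) :=
    fun z hz k _ => ⟨(hz.1 k).1, (hz.1 k).2⟩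
  have hclosed : IsClosed T := by
    have c1 : IsClosed {z : K → ℝ | ∀ k, -1 ≤ z k ∧ z k ≤ 1} := by
      have : {z : K → ℝ | ∀ k, -1 ≤ z k ∧ z k ≤ 1} = ⋂ k, {z | -1 ≤ z k ∧ z k ≤ 1} := by
        ext z; simp
      rw [this]
      exact isClosed_iInter fun k =>
        ((isClosed_le continuous_const (continuous_apply k)).inter
          (isClosed_le (continuous_apply k) continuous_const))
    have c2 : IsClosed {z : K → ℝ | ∑ k, |z k| ≤ Γ} :=
      isClosed_le (continuous_finset_sum _ fun k _ => (continuous_apply k).abs) continuous_const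
    have c3 : IsClosed {z : K → ℝ | ∀ k, 0 ≤ qhat k + qbar k * z k} := by
      have : {z : K → ℝ | ∀ k, 0 ≤ qhat k + qbar k * z k}
          = ⋂ k, {z | 0 ≤ qhat k + qbar k * z k} := by ext z; simp
      rw [this]
      exact isClosed_iInter fun k => isClosed_le continuous_const
        (continuous_const.add (continuous_const.mul (continuous_apply k)))
    have c4 : IsClosed {z : K → ℝ | (∑ k, (qhat k + qbar k * z k)) = 1} :=
      isClosed_eq (continuous_finset_sum _ fun k _ =>
        continuous_const.add (continuous_const.mul (continuous_apply k))) continuous_const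
    exact c1.inter (c2.inter (c3.inter c4))
  have hTc : IsCompact T :=
    IsCompact.of_isClosed_subset (isCompact_univ_pi fun _ => isCompact_Icc) hclosed hsub
  have hTne : T.Nonempty := by
    refine ⟨0, fun k => by norm_num, by simpa using hΓ, fun k => by simpa using hqhat.1 k, ?_⟩
    simpa using hqhat.2
  have hfc : Continuous (fun z : K → ℝ => ∑ k, (qhat k + qbar k * z k) * γ k) :=
    continuous_finset_sum _ fun k _ =>
      (continuous_const.add (continuous_const.mul (continuous_apply k))).mul continuous_const
  have himg : {x : ℝ | ∃ q : K → ℝ,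
      (∃ z : K → ℝ, (∀ k, -1 ≤ z k ∧ z k ≤ 1) ∧ (∑ k, |z k| ≤ Γ) ∧
        (∀ k, q k = qhat k + qbar k * z k) ∧ (∀ k, 0 ≤ q k) ∧ (∑ k, q k = 1)) ∧
      x = ∑ k, q k * γ k} = (fun z : K → ℝ => ∑ k, (qhat k + qbar k * z k) * γ k) '' T := by
    ext x
    constructor
    · rintro ⟨q, ⟨z, hz1, hz2, hz3, hz4, hz5⟩, rfl⟩
      refine ⟨z, ⟨hz1, hz2, fun k => (hz3 k) ▸ hz4 k, by
        rw [← hz5]; exact Finset.sum_congr rfl fun k _ => (hz3 k).symm⟩, ?_⟩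
      exact Finset.sum_congr rfl fun k _ => by rw [hz3 k]
    · rintro ⟨z, hzT, rfl⟩
      exact ⟨fun k => qhat k + qbar k * z k,
        ⟨z, hzT.1, hzT.2.1, fun k => rfl, hzT.2.2.1, hzT.2.2.2⟩, rfl⟩
  rw [himg]
  exact (hTc.image hfc).exists_isGreatest (hTne.image _)


/-- strong LP duality for the worst-case expectation over the
budgeted ambiguity set: both the primal supremum and the dual infimum are
attained and equal (the common value `M` realizing `IsGreatest` of the primal
values and `IsLeast` of the dual values). -/
theorem budgeted_worst_case_expectation_duality {K : Type*} [Fintype K] [Nonempty K]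
    (qhat : K → ℝ) (hqhat : qhat ∈ stdSimplex ℝ K)
    (qbar : K → ℝ) (hqbar : ∀ k, 0 ≤ qbar k)
    (Γ : ℝ) (hΓ : 0 ≤ Γ) (γ : K → ℝ) :
    ∃ M : ℝ,
      IsGreatest {x : ℝ | ∃ q : K → ℝ,
          (∃ z : K → ℝ, (∀ k, -1 ≤ z k ∧ z k ≤ 1) ∧ (∑ k, |z k| ≤ Γ) ∧
            (∀ k, q k = qhat k + qbar k * z k) ∧ (∀ k, 0 ≤ q k) ∧ (∑ k, q k = 1)) ∧
          x = ∑ k, q k * γ k} M ∧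
      IsLeast {x : ℝ | ∃ (w wm β : K → ℝ) (χ : ℝ),
          (∀ k, qbar k * β k - w k ≤ χ) ∧
          (∀ k, -(qbar k * β k) - wm k ≤ χ) ∧
          (∀ k, 0 ≤ w k) ∧ (∀ k, 0 ≤ wm k) ∧ 0 ≤ χ ∧
          x = (∑ k, w k) + (∑ k, wm k) + Γ * χ + (∑ k, qhat k * β k)
              + (⨆ k, (γ k - β k))} M := by
  classical
  obtain ⟨M, hM⟩ := primal_attained qhat hqhat qbar Γ hΓ γ
  refine ⟨M, hM, ?_, ?_⟩
  · -- M belongs to the dual set: Farkas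
    set Amat : ((K ⊕ K) ⊕ ((K ⊕ K) ⊕ (K ⊕ Fin 2))) → (((K ⊕ K) ⊕ (K ⊕ Fin 2)) → ℝ) :=
      Sum.elim
        (Sum.elim
          (fun k => Pi.single (Sum.inl (Sum.inl k)) (-1)
            + Pi.single (Sum.inr (Sum.inl k)) (qbar k)
            + Pi.single (Sum.inr (Sum.inr 0)) (-1))
          (fun k => Pi.single (Sum.inl (Sum.inr k)) (-1)
            + Pi.single (Sum.inr (Sum.inl k)) (-(qbar k))
            + Pi.single (Sum.inr (Sum.inr 0)) (-1)))
        (Sum.elim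
          (Sum.elim (fun k => Pi.single (Sum.inl (Sum.inl k)) (-1))
            (fun k => Pi.single (Sum.inl (Sum.inr k)) (-1)))
          (Sum.elim
            (fun k => Pi.single (Sum.inr (Sum.inl k)) (-1)
              + Pi.single (Sum.inr (Sum.inr 1)) (-1))
            ![Pi.single (Sum.inr (Sum.inr 0)) (-1),
              Sum.elim (Sum.elim (fun _ => 1) (fun _ => 1)) (Sum.elim qhat ![Γ, 1])])) with hAmat
    set bvec : ((K ⊕ K) ⊕ ((K ⊕ K) ⊕ (K ⊕ Fin 2))) → ℝ :=
      Sum.elim (Sum.elim (fun _ => 0) (fun _ => 0))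
        (Sum.elim (Sum.elim (fun _ => 0) (fun _ => 0))
          (Sum.elim (fun k => -γ k) ![0, M])) with hbvec
    have hfeas : ∃ x : ((K ⊕ K) ⊕ (K ⊕ Fin 2)) → ℝ, ∀ i, ∑ j, Amat i j * x j ≤ bvec i := by
      by_contra hcon
      obtain ⟨y, hy0, hyA, hyb⟩ := farkas' Amat bvec hcon
      -- column equations
      have hcw : ∀ k : K, y (Sum.inl (Sum.inl k)) + y (Sum.inr (Sum.inl (Sum.inl k)))
          = y (Sum.inr (Sum.inr (Sum.inr 1))) := by
        intro k
        have h := hyA (Sum.inl (Sum.inl k))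
        simp only [hAmat, Fintype.sum_sum_type, Sum.elim_inl, Sum.elim_inr, Pi.add_apply,
          Pi.single_apply, Sum.inl.injEq, Sum.inr.injEq, reduceCtorEq, if_false, if_true,
          mul_ite, mul_zero, mul_neg, mul_one, Finset.sum_ite_eq, Finset.mem_univ, if_pos,
          Finset.sum_const_zero, add_zero, zero_add, Fin.sum_univ_two, Matrix.cons_val_zero,
          Matrix.cons_val_one, Matrix.head_cons, Fin.isValue] at h
        linarith [h]
      have hcwm : ∀ k : K, y (Sum.inl (Sum.inr k)) + y (Sum.inr (Sum.inl (Sum.inr k)))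
          = y (Sum.inr (Sum.inr (Sum.inr 1))) := by
        intro k
        have h := hyA (Sum.inl (Sum.inr k))
        simp only [hAmat, Fintype.sum_sum_type, Sum.elim_inl, Sum.elim_inr, Pi.add_apply,
          Pi.single_apply, Sum.inl.injEq, Sum.inr.injEq, reduceCtorEq, if_false, if_true,
          mul_ite, mul_zero, mul_neg, mul_one, Finset.sum_ite_eq, Finset.mem_univ, if_pos,
          Finset.sum_const_zero, add_zero, zero_add, Fin.sum_univ_two, Matrix.cons_val_zero,
          Matrix.cons_val_one, Matrix.head_cons, Fin.isValue] at h
        linarith [h]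
      have hcb : ∀ k : K, y (Sum.inr (Sum.inr (Sum.inl k)))
          = qbar k * y (Sum.inl (Sum.inl k)) - qbar k * y (Sum.inl (Sum.inr k))
            + y (Sum.inr (Sum.inr (Sum.inr 1))) * qhat k := by
        intro k
        have h := hyA (Sum.inr (Sum.inl k))
        simp only [hAmat, Fintype.sum_sum_type, Sum.elim_inl, Sum.elim_inr, Pi.add_apply,
          Pi.single_apply, Sum.inl.injEq, Sum.inr.injEq, reduceCtorEq, if_false, if_true,
          mul_ite, mul_zero, mul_neg, mul_one, Finset.sum_ite_eq, Finset.mem_univ, if_pos,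
          Finset.sum_const_zero, add_zero, zero_add, Fin.sum_univ_two, Matrix.cons_val_zero,
          Matrix.cons_val_one, Matrix.head_cons, Fin.isValue] at h
        linear_combination -h
      have hcx : (∑ k, y (Sum.inl (Sum.inl k))) + (∑ k, y (Sum.inl (Sum.inr k)))
          + y (Sum.inr (Sum.inr (Sum.inr 0)))
          = y (Sum.inr (Sum.inr (Sum.inr 1))) * Γ := by
        have h := hyA (Sum.inr (Sum.inr 0))
        simp only [hAmat, Fintype.sum_sum_type, Sum.elim_inl, Sum.elim_inr, Pi.add_apply,
          Pi.single_apply, Sum.inl.injEq, Sum.inr.injEq, reduceCtorEq, if_false, if_true,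
          mul_ite, mul_zero, mul_neg, mul_one, Finset.sum_ite_eq, Finset.mem_univ, if_pos,
          Finset.sum_const_zero, add_zero, zero_add, Fin.sum_univ_two, Matrix.cons_val_zero,
          Matrix.cons_val_one, Matrix.head_cons, Fin.isValue, Finset.sum_neg_distrib, Fin.reduceEq,
          reduceIte] at h
        linear_combination -h
      have hct : (∑ k, y (Sum.inr (Sum.inr (Sum.inl k))))
          = y (Sum.inr (Sum.inr (Sum.inr 1))) := by
        have h := hyA (Sum.inr (Sum.inr 1))
        simp only [hAmat, Fintype.sum_sum_type, Sum.elim_inl, Sum.elim_inr, Pi.add_apply,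
          Pi.single_apply, Sum.inl.injEq, Sum.inr.injEq, reduceCtorEq, if_false, if_true,
          mul_ite, mul_zero, mul_neg, mul_one, Finset.sum_ite_eq, Finset.mem_univ, if_pos,
          Finset.sum_const_zero, add_zero, zero_add, Fin.sum_univ_two, Matrix.cons_val_zero,
          Matrix.cons_val_one, Matrix.head_cons, Fin.isValue, Finset.sum_neg_distrib, Fin.reduceEq,
          reduceIte] at h
        linear_combination -h
      have hobj : y (Sum.inr (Sum.inr (Sum.inr 1))) * M
          < ∑ k, y (Sum.inr (Sum.inr (Sum.inl k))) * γ k := by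
        have h := hyb
        simp only [hbvec, Fintype.sum_sum_type, Sum.elim_inl, Sum.elim_inr,
          mul_zero, mul_neg, mul_one, Finset.sum_const_zero, add_zero, zero_add,
          Fin.sum_univ_two, Matrix.cons_val_zero, Matrix.cons_val_one, Matrix.head_cons,
          Fin.isValue, Finset.sum_neg_distrib] at h
        linarith [h]
      have hgpos : 0 < y (Sum.inr (Sum.inr (Sum.inr 1))) := by
        rcases (hy0 (Sum.inr (Sum.inr (Sum.inr 1)))).lt_or_eq with hgt | heq
        · exact hgt
        · exfalso
          have ha0 : ∀ k : K, y (Sum.inl (Sum.inl k)) = 0 := by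
            intro k
            have := hcw k
            have h1 := hy0 (Sum.inl (Sum.inl k))
            have h2 := hy0 (Sum.inr (Sum.inl (Sum.inl k)))
            linarith
          have hb0 : ∀ k : K, y (Sum.inl (Sum.inr k)) = 0 := by
            intro k
            have := hcwm k
            have h1 := hy0 (Sum.inl (Sum.inr k))
            have h2 := hy0 (Sum.inr (Sum.inl (Sum.inr k)))
            linarith
          have hf0 : ∀ k : K, y (Sum.inr (Sum.inr (Sum.inl k))) = 0 := by
            intro k
            rw [hcb k, ha0 k, hb0 k, ← heq]
            ring
          have : (∑ k, y (Sum.inr (Sum.inr (Sum.inl k))) * γ k) = 0 :=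
            Finset.sum_eq_zero fun k _ => by rw [hf0 k, zero_mul]
          rw [this, ← heq, zero_mul] at hobj
          exact lt_irrefl 0 hobj
      -- build a primal point beating M
      set G := y (Sum.inr (Sum.inr (Sum.inr 1))) with hG
      set zz : K → ℝ := fun k => (y (Sum.inl (Sum.inl k)) - y (Sum.inl (Sum.inr k))) / G with hzz
      set qq : K → ℝ := fun k => qhat k + qbar k * zz k with hqq
      have hqf : ∀ k, qq k = y (Sum.inr (Sum.inr (Sum.inl k))) / G := by
        intro k
        rw [hqq]
        simp only [hzz]
        rw [hcb k]
        field_simp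
        ring
      have hzlo : ∀ k, -1 ≤ zz k := by
        intro k
        rw [hzz]
        rw [le_div_iff₀ hgpos]
        have h1 := hy0 (Sum.inl (Sum.inl k))
        have h2 := hy0 (Sum.inr (Sum.inl (Sum.inr k)))
        have := hcwm k
        linarith
      have hzhi : ∀ k, zz k ≤ 1 := by
        intro k
        rw [hzz]
        rw [div_le_iff₀ hgpos]
        have h1 := hy0 (Sum.inl (Sum.inr k))
        have h2 := hy0 (Sum.inr (Sum.inl (Sum.inl k)))
        have := hcw k
        linarith
      have hzsum : ∑ k, |zz k| ≤ Γ := by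
        have habs : ∀ k : K, |zz k| ≤ (y (Sum.inl (Sum.inl k)) + y (Sum.inl (Sum.inr k))) / G := by
          intro k
          simp only [hzz]
          rw [abs_div, abs_of_pos hgpos, div_le_div_iff_of_pos_right hgpos]
          exact abs_le.mpr ⟨by linarith [hy0 (Sum.inl (Sum.inl k)), hy0 (Sum.inl (Sum.inr k))],
            by linarith [hy0 (Sum.inl (Sum.inl k)), hy0 (Sum.inl (Sum.inr k))]⟩
        calc ∑ k, |zz k|
            ≤ ∑ k, (y (Sum.inl (Sum.inl k)) + y (Sum.inl (Sum.inr k))) / G :=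
              Finset.sum_le_sum fun k _ => habs k
          _ = ((∑ k, y (Sum.inl (Sum.inl k))) + (∑ k, y (Sum.inl (Sum.inr k)))) / G := by
              rw [← Finset.sum_div, Finset.sum_add_distrib]
          _ ≤ Γ := by
              rw [div_le_iff₀ hgpos, mul_comm]
              linarith [hcx, hy0 (Sum.inr (Sum.inr (Sum.inr 0)))]
      have hq0 : ∀ k, 0 ≤ qq k := fun k => by
        rw [hqf k]; exact div_nonneg (hy0 _) hgpos.le
      have hq1 : ∑ k, qq k = 1 := by
        rw [Finset.sum_congr rfl fun k _ => hqf k, ← Finset.sum_div, hct]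
        exact div_self hgpos.ne'
      have hval : M < ∑ k, qq k * γ k := by
        have e1 : ∀ k : K, qq k * γ k = y (Sum.inr (Sum.inr (Sum.inl k))) * γ k / G := by
          intro k; rw [hqf k]; ring
        rw [Finset.sum_congr rfl fun k _ => e1 k, ← Finset.sum_div, lt_div_iff₀ hgpos]
        linarith [hobj]
      have hmem : (∑ k, qq k * γ k) ∈ {x : ℝ | ∃ q : K → ℝ,
          (∃ z : K → ℝ, (∀ k, -1 ≤ z k ∧ z k ≤ 1) ∧ (∑ k, |z k| ≤ Γ) ∧
            (∀ k, q k = qhat k + qbar k * z k) ∧ (∀ k, 0 ≤ q k) ∧ (∑ k, q k = 1)) ∧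
          x = ∑ k, q k * γ k} :=
        ⟨qq, ⟨zz, fun k => ⟨hzlo k, hzhi k⟩, hzsum, fun k => rfl, hq0, hq1⟩, rfl⟩
      exact absurd (hM.2 hmem) (not_le.mpr hval)
    -- extract the dual optimal solution
    obtain ⟨x, hx⟩ := hfeas
    have hr1 : ∀ k : K, qbar k * x (Sum.inr (Sum.inl k)) - x (Sum.inl (Sum.inl k))
        - x (Sum.inr (Sum.inr 0)) ≤ 0 := by
      intro k
      have h := hx (Sum.inl (Sum.inl k))
      simp only [hAmat, hbvec, Fintype.sum_sum_type, Sum.elim_inl, Sum.elim_inr, Pi.add_apply,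
        Pi.single_apply, Sum.inl.injEq, Sum.inr.injEq, reduceCtorEq, if_false, if_true,
        ite_mul, zero_mul, neg_mul, one_mul, Finset.sum_ite_eq', Finset.mem_univ, if_pos,
        Finset.sum_const_zero, add_zero, zero_add, Fin.sum_univ_two, Matrix.cons_val_zero,
        Matrix.cons_val_one, Matrix.head_cons, Fin.isValue, Finset.sum_neg_distrib, Fin.reduceEq,
          reduceIte] at h
      linarith [h]
    have hr2 : ∀ k : K, -(qbar k * x (Sum.inr (Sum.inl k))) - x (Sum.inl (Sum.inr k))
        - x (Sum.inr (Sum.inr 0)) ≤ 0 := by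
      intro k
      have h := hx (Sum.inl (Sum.inr k))
      simp only [hAmat, hbvec, Fintype.sum_sum_type, Sum.elim_inl, Sum.elim_inr, Pi.add_apply,
        Pi.single_apply, Sum.inl.injEq, Sum.inr.injEq, reduceCtorEq, if_false, if_true,
        ite_mul, zero_mul, neg_mul, one_mul, Finset.sum_ite_eq', Finset.mem_univ, if_pos,
        Finset.sum_const_zero, add_zero, zero_add, Fin.sum_univ_two, Matrix.cons_val_zero,
        Matrix.cons_val_one, Matrix.head_cons, Fin.isValue, Finset.sum_neg_distrib, Fin.reduceEq,
          reduceIte] at h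
      linarith [h]
    have hr3 : ∀ k : K, 0 ≤ x (Sum.inl (Sum.inl k)) := by
      intro k
      have h := hx (Sum.inr (Sum.inl (Sum.inl k)))
      simp only [hAmat, hbvec, Fintype.sum_sum_type, Sum.elim_inl, Sum.elim_inr, Pi.add_apply,
        Pi.single_apply, Sum.inl.injEq, Sum.inr.injEq, reduceCtorEq, if_false, if_true,
        ite_mul, zero_mul, neg_mul, one_mul, Finset.sum_ite_eq', Finset.mem_univ, if_pos,
        Finset.sum_const_zero, add_zero, zero_add, Fin.sum_univ_two, Matrix.cons_val_zero,
        Matrix.cons_val_one, Matrix.head_cons, Fin.isValue, Finset.sum_neg_distrib, Fin.reduceEq,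
          reduceIte] at h
      linarith [h]
    have hr4 : ∀ k : K, 0 ≤ x (Sum.inl (Sum.inr k)) := by
      intro k
      have h := hx (Sum.inr (Sum.inl (Sum.inr k)))
      simp only [hAmat, hbvec, Fintype.sum_sum_type, Sum.elim_inl, Sum.elim_inr, Pi.add_apply,
        Pi.single_apply, Sum.inl.injEq, Sum.inr.injEq, reduceCtorEq, if_false, if_true,
        ite_mul, zero_mul, neg_mul, one_mul, Finset.sum_ite_eq', Finset.mem_univ, if_pos,
        Finset.sum_const_zero, add_zero, zero_add, Fin.sum_univ_two, Matrix.cons_val_zero,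
        Matrix.cons_val_one, Matrix.head_cons, Fin.isValue, Finset.sum_neg_distrib, Fin.reduceEq,
          reduceIte] at h
      linarith [h]
    have hr5 : 0 ≤ x (Sum.inr (Sum.inr 0)) := by
      have h := hx (Sum.inr (Sum.inr (Sum.inr 0)))
      simp only [hAmat, hbvec, Fintype.sum_sum_type, Sum.elim_inl, Sum.elim_inr, Pi.add_apply,
        Pi.single_apply, Sum.inl.injEq, Sum.inr.injEq, reduceCtorEq, if_false, if_true,
        ite_mul, zero_mul, neg_mul, one_mul, Finset.sum_ite_eq', Finset.mem_univ, if_pos,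
        Finset.sum_const_zero, add_zero, zero_add, Fin.sum_univ_two, Matrix.cons_val_zero,
        Matrix.cons_val_one, Matrix.head_cons, Fin.isValue, Finset.sum_neg_distrib, Fin.reduceEq,
          reduceIte] at h
      linarith [h]
    have hr6 : ∀ k : K, γ k - x (Sum.inr (Sum.inl k)) ≤ x (Sum.inr (Sum.inr 1)) := by
      intro k
      have h := hx (Sum.inr (Sum.inr (Sum.inl k)))
      simp only [hAmat, hbvec, Fintype.sum_sum_type, Sum.elim_inl, Sum.elim_inr, Pi.add_apply,
        Pi.single_apply, Sum.inl.injEq, Sum.inr.injEq, reduceCtorEq, if_false, if_true,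
        ite_mul, zero_mul, neg_mul, one_mul, Finset.sum_ite_eq', Finset.mem_univ, if_pos,
        Finset.sum_const_zero, add_zero, zero_add, Fin.sum_univ_two, Matrix.cons_val_zero,
        Matrix.cons_val_one, Matrix.head_cons, Fin.isValue, Finset.sum_neg_distrib, Fin.reduceEq,
          reduceIte] at h
      linarith [h]
    have hr7 : (∑ k, x (Sum.inl (Sum.inl k))) + (∑ k, x (Sum.inl (Sum.inr k)))
        + (∑ k, qhat k * x (Sum.inr (Sum.inl k))) + Γ * x (Sum.inr (Sum.inr 0))
        + x (Sum.inr (Sum.inr 1)) ≤ M := by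
      have h := hx (Sum.inr (Sum.inr (Sum.inr 1)))
      simp only [hAmat, hbvec, Fintype.sum_sum_type, Sum.elim_inl, Sum.elim_inr, Pi.add_apply,
        Pi.single_apply, Sum.inl.injEq, Sum.inr.injEq, reduceCtorEq, if_false, if_true,
        ite_mul, zero_mul, neg_mul, one_mul, Finset.sum_ite_eq', Finset.mem_univ, if_pos,
        Finset.sum_const_zero, add_zero, zero_add, Fin.sum_univ_two, Matrix.cons_val_zero,
        Matrix.cons_val_one, Matrix.head_cons, Fin.isValue, Finset.sum_neg_distrib, Fin.reduceEq,
          reduceIte] at h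
      linarith [h]
    have hsup : (⨆ k, (γ k - x (Sum.inr (Sum.inl k)))) ≤ x (Sum.inr (Sum.inr 1)) :=
      ciSup_le hr6
    have hwd : M ≤ (∑ k, x (Sum.inl (Sum.inl k))) + (∑ k, x (Sum.inl (Sum.inr k)))
        + Γ * x (Sum.inr (Sum.inr 0)) + (∑ k, qhat k * x (Sum.inr (Sum.inl k)))
        + (⨆ k, (γ k - x (Sum.inr (Sum.inl k)))) := by
      obtain ⟨q, ⟨z, hz1, hz2, hz3, hz4, hz5⟩, hMq⟩ := hM.1
      rw [hMq]
      exact weak_duality qhat qbar Γ γ _ _ _ _ (fun k => by linarith [hr1 k])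
        (fun k => by linarith [hr2 k]) hr3 hr4 hr5 z q hz1 hz2 hz3 hz4 hz5
    exact ⟨(fun k => x (Sum.inl (Sum.inl k))), (fun k => x (Sum.inl (Sum.inr k))),
      (fun k => x (Sum.inr (Sum.inl k))), x (Sum.inr (Sum.inr 0)),
      fun k => by linarith [hr1 k], fun k => by linarith [hr2 k], hr3, hr4, hr5,
      by linarith [hwd, hr7, hsup]⟩
  · -- M is a lower bound of the dual set
    rintro x ⟨w, wm, β, χ, h1, h2, hw, hwm, hχ, rfl⟩
    obtain ⟨q, ⟨z, hz1, hz2, hz3, hz4, hz5⟩, hMq⟩ := hM.1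
    rw [hMq]
    exact weak_duality qhat qbar Γ γ w wm β χ h1 h2 hw hwm hχ z q hz1 hz2 hz3 hz4 hz5
end
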